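/- Let p be an odd prime. Then (1/n) Σ_{i=1}^{n} ν_p(i^p + 1) tends to (2p-1)/(p(p-1)) as n → ∞. -/

import Mathlib

/-!
Since `x ^ p ≡ x (mod p)`, `p` divides `i ^ p + 1` exactly when it divides `i + 1`, and then
lifting the exponent gives `ν_p(i ^ p + 1) = ν_p(i + 1) + 1`. Summing over `1 ≤ i ≤ n`,
the valuations `ν_p(i + 1)` add up to `ν_p((n + 1)!)` and the extra ones count the multiples of
`p` in `[2, n + 1]`, i.e. `(n + 1) / p`. By Legendre, `(p - 1) ν_p(m!) = m - s_p(m)` where the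
digit sum `s_p(m)` is `O(log m)`, so `ν_p(m!) / m → 1 / (p - 1)`, and the total density is
`1 / (p - 1) + 1 / p = (2p - 1) / (p (p - 1))`.
-/

open Filter Topology Nat

theorem Nat.digits_sum_le_mul_log_add_one {b : ℕ} (hb : 1 < b) (n : ℕ) :
    (b.digits n).sum ≤ (b - 1) * (Nat.log b n + 1) := by
  rcases eq_or_ne n 0 with rfl | hn
  · simp
  have hdigit : ∀ d ∈ b.digits n, d ≤ b - 1 := fun d hd =>
    Nat.le_sub_one_of_lt (Nat.digits_lt_base hb hd)
  simpa [Nat.length_digits b n hb hn, mul_comm] using List.sum_le_card_nsmul _ _ hdigit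

theorem tendsto_natLog_div_atTop (b : ℕ) :
    Tendsto (fun n : ℕ => (Nat.log b n : ℝ) / n) atTop (𝓝 0) := by
  have hlog : Tendsto (fun n : ℕ => Real.log n / n / Real.log b) atTop (𝓝 0) := by
    simpa using (Real.isLittleO_log_id_atTop.tendsto_div_nhds_zero.comp
      tendsto_natCast_atTop_atTop).div_const (Real.log b)
  refine tendsto_of_tendsto_of_tendsto_of_le_of_le tendsto_const_nhds hlog
    (fun n => by positivity) (fun n => ?_)
  calc (Nat.log b n : ℝ) / n ≤ Real.logb b n / n := by
        gcongr; exact Real.natLog_le_logb n b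
    _ = Real.log n / n / Real.log b := by rw [Real.logb, div_right_comm]

theorem tendsto_digits_sum_div_atTop {b : ℕ} (hb : 1 < b) :
    Tendsto (fun n : ℕ => ((b.digits n).sum : ℝ) / n) atTop (𝓝 0) := by
  have hbound : Tendsto (fun n : ℕ => ((b : ℝ) - 1) * ((Nat.log b n : ℝ) / n + 1 / n))
      atTop (𝓝 0) := by
    simpa using ((tendsto_natLog_div_atTop b).add
      tendsto_one_div_atTop_nhds_zero_nat).const_mul ((b : ℝ) - 1)
  refine tendsto_of_tendsto_of_tendsto_of_le_of_le tendsto_const_nhds hbound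
    (fun n => by positivity) (fun n => ?_)
  have h := Nat.digits_sum_le_mul_log_add_one hb n
  rw [← add_div, ← mul_div_assoc]
  gcongr
  exact_mod_cast (Nat.cast_le.mpr h).trans_eq (by push_cast [Nat.cast_sub hb.le]; ring)

theorem tendsto_padicValNat_factorial_div_atTop (p : ℕ) [hp : Fact p.Prime] :
    Tendsto (fun n : ℕ => (padicValNat p n ! : ℝ) / n) atTop (𝓝 (1 / ((p : ℝ) - 1))) := by
  have hp1 : (1 : ℝ) < p := by exact_mod_cast hp.out.one_lt
  have h := ((tendsto_digits_sum_div_atTop hp.out.one_lt).const_sub 1).div_const ((p : ℝ) - 1)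
  rw [sub_zero] at h
  refine h.congr' ?_
  filter_upwards [eventually_ne_atTop 0] with n hn
  have hlegendre := congrArg (Nat.cast : ℕ → ℝ) (sub_one_mul_padicValNat_factorial (p := p) n)
  rw [Nat.cast_mul, Nat.cast_sub hp.out.one_le, Nat.cast_sub (Nat.digit_sum_le p n),
    Nat.cast_one] at hlegendre
  have hn' : (n : ℝ) ≠ 0 := Nat.cast_ne_zero.mpr hn
  rw [div_eq_div_iff (by linarith) hn', sub_mul, one_mul, div_mul_cancel₀ _ hn']
  linarith

theorem tendsto_nat_div_div_atTop {p : ℕ} (hp : p ≠ 0) :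
    Tendsto (fun n : ℕ => ((n / p : ℕ) : ℝ) / n) atTop (𝓝 (1 / (p : ℝ))) := by
  have hpos : (0 : ℝ) < p := by positivity
  have h := (tendsto_nat_floor_div_atTop.comp
    (tendsto_natCast_atTop_atTop.atTop_div_const hpos)).mul_const (1 / (p : ℝ))
  rw [one_mul] at h
  refine h.congr' ?_
  filter_upwards [eventually_ne_atTop 0] with n hn
  simp only [Function.comp_apply, Nat.floor_div_eq_div]
  field_simp

theorem tendsto_succ_div_of_tendsto_div {f : ℕ → ℝ} {L : ℝ}
    (hf : Tendsto (fun n : ℕ => f n / n) atTop (𝓝 L)) :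
    Tendsto (fun n : ℕ => f (n + 1) / n) atTop (𝓝 L) := by
  have hratio : Tendsto (fun n : ℕ => (1 + (n : ℝ)) / n) atTop (𝓝 1) := by
    simpa using tendsto_add_mul_div_add_mul_atTop_nhds (1 : ℝ) 0 1 one_ne_zero
  have h := ((tendsto_add_atTop_iff_nat 1).mpr hf).mul hratio
  rw [mul_one] at h
  refine h.congr' ?_
  filter_upwards [eventually_ne_atTop 0] with n hn
  push_cast
  field_simp
  ring

theorem Nat.Prime.dvd_pow_self_add_one_iff {p : ℕ} (hp : p.Prime) (x : ℕ) :
    p ∣ x ^ p + 1 ↔ p ∣ x + 1 := by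
  have := Fact.mk hp
  simp only [← ZMod.natCast_eq_zero_iff, Nat.cast_add, Nat.cast_pow, Nat.cast_one, ZMod.pow_card]

theorem padicValNat_pow_self_add_one {p : ℕ} [hp : Fact p.Prime] (hodd : Odd p) (x : ℕ) :
    padicValNat p (x ^ p + 1) = padicValNat p (x + 1) + if p ∣ x + 1 then 1 else 0 := by
  by_cases hdvd : p ∣ x + 1
  · have hx : ¬p ∣ x := fun hx => hp.out.not_dvd_one ((Nat.dvd_add_right hx).mp hdvd)
    simpa [hdvd, padicValNat.self hp.out.one_lt] using
      padicValNat.pow_add_pow hodd (y := 1) hdvd hx hodd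
  · rw [padicValNat.eq_zero_of_not_dvd ((hp.out.dvd_pow_self_add_one_iff x).not.mpr hdvd),
      padicValNat.eq_zero_of_not_dvd hdvd, if_neg hdvd]

theorem sum_padicValNat_pow_self_add_one {p : ℕ} [hp : Fact p.Prime] (hodd : Odd p) (n : ℕ) :
    ∑ i ∈ Finset.Icc 1 n, padicValNat p (i ^ p + 1) = padicValNat p (n + 1)! + (n + 1) / p := by
  induction n with
  | zero => simp [Nat.div_eq_of_lt hp.out.one_lt]
  | succ n ih =>
    rw [Finset.sum_Icc_succ_top (by omega), ih, padicValNat_pow_self_add_one hodd,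
      Nat.factorial_succ (n + 1), padicValNat.mul (by omega) (Nat.factorial_ne_zero _),
      Nat.succ_div (a := n + 1) (b := p)]
    ring

theorem valp_pow_p_add_one_asymptotic (p : ℕ) (hp : p.Prime) (hodd : Odd p) :
    Tendsto (fun n : ℕ =>
        (∑ i ∈ Finset.Icc 1 n, (padicValInt p ((i : ℤ) ^ p + 1) : ℝ)) / n)
      atTop (nhds ((2 * (p : ℝ) - 1) / ((p : ℝ) * ((p : ℝ) - 1)))) := by
  have := Fact.mk hp
  have hlimit : 1 / ((p : ℝ) - 1) + 1 / p = (2 * (p : ℝ) - 1) / ((p : ℝ) * ((p : ℝ) - 1)) := by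
    have hp1 : (p : ℝ) - 1 ≠ 0 := sub_ne_zero.mpr (by exact_mod_cast hp.one_lt.ne')
    have hp0 : (p : ℝ) ≠ 0 := by exact_mod_cast hp.ne_zero
    field_simp
    ring
  have h := tendsto_succ_div_of_tendsto_div <|
    ((tendsto_padicValNat_factorial_div_atTop p).add (tendsto_nat_div_div_atTop hp.ne_zero)).congr
      fun m => (add_div _ _ _).symm
  rw [hlimit] at h
  refine h.congr fun n => ?_
  have hterm (i : ℕ) : padicValInt p ((i : ℤ) ^ p + 1) = padicValNat p (i ^ p + 1) := by
    exact_mod_cast padicValInt.of_nat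
  simp only [hterm]
  exact_mod_cast congrArg (fun k : ℕ => (k : ℝ) / n) (sum_padicValNat_pow_self_add_one hodd n).symm
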